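/- arXiv:2402.10366 — 3 statements merged into one kernel-verified Lean document; each statement's English description precedes it below -/
import Mathlib

section
/- Let (Y,μ) be a measure space with μ a finite measure, let h₀ > 0 and T > 0, and let v : [0,T] × Y → ℝ and f : [0,T] × Y → ℝ be measurable functions such that for each y ∈ Y the maps t ↦ v(t,y) and t ↦ f(t,y) are respectively differentiable and continuously differentiable, v(t,y) > 0 for all (t,y), ∂_t v(t,y) ≤ −2·h₀·v(t,y) for all (t,y), and all the functions (∂_t f)²·v, f²·v, f(T,·)²·v(T,·), f(0,·)²·v(0,·) are integrable on [0,T] × Y (respectively on Y). Then (1/h₀)·∫_Y ∫₀ᵀ (∂_t f(t,y))²·v(t,y) dt dμ(y) ≥ h₀·∫_Y ∫₀ᵀ f(t,y)²·v(t,y) dt dμ(y) + ∫_Y f(T,y)²·v(T,y) dμ(y) − ∫_Y f(0,y)²·v(0,y) dμ(y). -/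
open MeasureTheory Set

lemma fiber_ineq {h₀ T : ℝ} (hh₀ : 0 < h₀) (hT : 0 < T)
    (v v' f f' : ℝ → ℝ)
    (hv : ∀ t ∈ Icc (0:ℝ) T, HasDerivAt v (v' t) t)
    (hf : ∀ t ∈ Icc (0:ℝ) T, HasDerivAt f (f' t) t)
    (hf'c : ContinuousOn f' (Icc (0:ℝ) T))
    (hvpos : ∀ t ∈ Icc (0:ℝ) T, 0 < v t)
    (hv' : ∀ t ∈ Icc (0:ℝ) T, v' t ≤ -2 * h₀ * v t) :
    f T ^ 2 * v T - f 0 ^ 2 * v 0 ≤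
      ∫ t in (0:ℝ)..T, ((1/h₀) * (f' t ^ 2 * v t) - h₀ * (f t ^ 2 * v t)) := by
  set φ : ℝ → ℝ := fun t => (1/h₀) * (f' t ^ 2 * v t) - h₀ * (f t ^ 2 * v t) with hφ
  have hvc : ContinuousOn v (Icc 0 T) := fun t ht => ((hv t ht).continuousAt).continuousWithinAt
  have hfc : ContinuousOn f (Icc 0 T) := fun t ht => ((hf t ht).continuousAt).continuousWithinAt
  have hφc : ContinuousOn φ (Icc 0 T) :=
    (continuousOn_const.mul ((hf'c.pow 2).mul hvc)).sub
      (continuousOn_const.mul ((hfc.pow 2).mul hvc))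
  have huIcc : uIcc (0:ℝ) T = Icc 0 T := uIcc_of_le hT.le
  have hφint : IntervalIntegrable φ volume 0 T :=
    ContinuousOn.intervalIntegrable (by rw [huIcc]; exact hφc)
  set G : ℝ → ℝ := fun t => f t ^ 2 * v t - ∫ s in (0:ℝ)..t, φ s with hG
  have hGc : ContinuousOn G (Icc 0 T) := by
    apply ContinuousOn.sub ((hfc.pow 2).mul hvc)
    have := intervalIntegral.continuousOn_primitive_interval'
      (μ := volume) (f := φ) (b₁ := (0:ℝ)) (b₂ := T) (a := (0:ℝ)) hφint
      (by rw [huIcc]; exact ⟨le_refl 0, hT.le⟩)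
    rwa [huIcc] at this
  have hGd : ∀ x ∈ Ioo (0:ℝ) T,
      HasDerivAt G (2 * f x ^ 1 * f' x * v x + f x ^ 2 * v' x - φ x) x := by
    intro x hx
    have hx' : x ∈ Icc (0:ℝ) T := Ioo_subset_Icc_self hx
    have hφcAt : ContinuousAt φ x := (hφc x hx').continuousAt (Icc_mem_nhds hx.1 hx.2)
    have hprim : HasDerivAt (fun u => ∫ s in (0:ℝ)..u, φ s) (φ x) x := by
      apply intervalIntegral.integral_hasDerivAt_right
        (hφint.mono_set (by rw [huIcc, uIcc_of_le hx'.1]; exact Icc_subset_Icc le_rfl hx'.2))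
        ((hφc.mono Ioo_subset_Icc_self).stronglyMeasurableAtFilter isOpen_Ioo x hx)
        hφcAt
    exact (((hf x hx').pow 2).mul (hv x hx')).sub hprim
  have hanti : AntitoneOn G (Icc 0 T) := by
    apply antitoneOn_of_deriv_nonpos (convex_Icc 0 T) hGc
    · intro x hx
      rw [interior_Icc] at hx
      exact (hGd x hx).differentiableAt.differentiableWithinAt
    · intro x hx
      rw [interior_Icc] at hx
      rw [(hGd x hx).deriv]
      have hx' : x ∈ Icc (0:ℝ) T := Ioo_subset_Icc_self hx
      have h1 := hv' x hx'
      have h2 := hvpos x hx'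
      have key : 2 * f x * f' x ≤ (1/h₀) * f' x ^ 2 + h₀ * f x ^ 2 := by
        have e : (1/h₀) * f' x ^ 2 + h₀ * f x ^ 2 - 2 * f x * f' x
            = (1/h₀) * (f' x - h₀ * f x) ^ 2 := by
          field_simp; ring
        have h := mul_nonneg (by positivity : (0:ℝ) ≤ 1/h₀) (sq_nonneg (f' x - h₀ * f x))
        linarith
      simp only [hφ, pow_one]
      nlinarith [mul_le_mul_of_nonneg_right key h2.le,
        mul_le_mul_of_nonneg_left h1 (sq_nonneg (f x))]
  have := hanti ⟨le_refl 0, hT.le⟩ ⟨hT.le, le_refl T⟩ hT.le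
  simp only [hG, intervalIntegral.integral_same, sub_zero] at this
  linarith

/-- Fibered Poincaré-type lemma (Lemma 4.1 of the paper) on a half cylinder
`[0,T] × Y`: if the fiberwise volume density `v` satisfies
`∂ₜ v ≤ -2 h₀ v` (mean curvature of the slices at least `h₀`), then
`(1/h₀) ∫_Y ∫₀ᵀ (∂ₜ f)² v ≥ h₀ ∫_Y ∫₀ᵀ f² v + ∫_{t=T} f² v - ∫_{t=0} f² v`. -/
theorem stmt1 {Y : Type*} [MeasurableSpace Y] (μ : Measure Y) [IsFiniteMeasure μ]
    (h₀ T : ℝ) (hh₀ : 0 < h₀) (hT : 0 < T)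
    (v v' f f' : ℝ → Y → ℝ)
    (hvmeas : Measurable (Function.uncurry v))
    (hfmeas : Measurable (Function.uncurry f))
    (hv : ∀ y : Y, ∀ t ∈ Set.Icc (0:ℝ) T, HasDerivAt (fun s => v s y) (v' t y) t)
    (hf : ∀ y : Y, ∀ t ∈ Set.Icc (0:ℝ) T, HasDerivAt (fun s => f s y) (f' t y) t)
    (hf' : ∀ y : Y, ContinuousOn (fun t => f' t y) (Set.Icc (0:ℝ) T))
    (hvpos : ∀ t ∈ Set.Icc (0:ℝ) T, ∀ y : Y, 0 < v t y)
    (hv' : ∀ t ∈ Set.Icc (0:ℝ) T, ∀ y : Y, v' t y ≤ -2 * h₀ * v t y)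
    (hint1 : Integrable (fun p : ℝ × Y => (f' p.1 p.2) ^ 2 * v p.1 p.2)
      ((volume.restrict (Set.Icc (0:ℝ) T)).prod μ))
    (hint2 : Integrable (fun p : ℝ × Y => (f p.1 p.2) ^ 2 * v p.1 p.2)
      ((volume.restrict (Set.Icc (0:ℝ) T)).prod μ))
    (hintT : Integrable (fun y => (f T y) ^ 2 * v T y) μ)
    (hint0 : Integrable (fun y => (f 0 y) ^ 2 * v 0 y) μ) :
    (1 / h₀) * ∫ y, (∫ t in (0:ℝ)..T, (f' t y) ^ 2 * v t y) ∂μ ≥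
      h₀ * ∫ y, (∫ t in (0:ℝ)..T, (f t y) ^ 2 * v t y) ∂μ
        + (∫ y, (f T y) ^ 2 * v T y ∂μ) - ∫ y, (f 0 y) ^ 2 * v 0 y ∂μ := by
  have hvc : ∀ y, ContinuousOn (fun t => v t y) (Set.Icc 0 T) :=
    fun y t ht => ((hv y t ht).continuousAt).continuousWithinAt
  have hfc : ∀ y, ContinuousOn (fun t => f t y) (Set.Icc 0 T) :=
    fun y t ht => ((hf y t ht).continuousAt).continuousWithinAt
  have huIcc : Set.uIcc (0:ℝ) T = Set.Icc 0 T := Set.uIcc_of_le hT.le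
  -- interval integrability of the fiber integrands
  have hii1 : ∀ y, IntervalIntegrable (fun t => (f' t y) ^ 2 * v t y) volume 0 T := fun y =>
    ContinuousOn.intervalIntegrable (by rw [huIcc]; exact ((hf' y).pow 2).mul (hvc y))
  have hii2 : ∀ y, IntervalIntegrable (fun t => (f t y) ^ 2 * v t y) volume 0 T := fun y =>
    ContinuousOn.intervalIntegrable (by rw [huIcc]; exact ((hfc y).pow 2).mul (hvc y))
  -- fiberwise inequality
  have key : ∀ y, (f T y) ^ 2 * v T y - (f 0 y) ^ 2 * v 0 y ≤
      (1/h₀) * (∫ t in (0:ℝ)..T, (f' t y) ^ 2 * v t y)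
        - h₀ * (∫ t in (0:ℝ)..T, (f t y) ^ 2 * v t y) := by
    intro y
    have := fiber_ineq hh₀ hT (fun t => v t y) (fun t => v' t y) (fun t => f t y)
      (fun t => f' t y) (hv y) (hf y) (hf' y) (fun t ht => hvpos t ht y)
      (fun t ht => hv' t ht y)
    rwa [intervalIntegral.integral_sub ((hii1 y).const_mul _) ((hii2 y).const_mul _),
      intervalIntegral.integral_const_mul, intervalIntegral.integral_const_mul] at this
  -- integrability of the fiberwise integrals
  have I1 : Integrable (fun y => ∫ t in (0:ℝ)..T, (f' t y) ^ 2 * v t y) μ := by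
    have := hint1.integral_prod_right
    simp only at this
    convert this using 2 with y
    rw [intervalIntegral.integral_of_le hT.le, ← MeasureTheory.integral_Icc_eq_integral_Ioc]
  have I2 : Integrable (fun y => ∫ t in (0:ℝ)..T, (f t y) ^ 2 * v t y) μ := by
    have := hint2.integral_prod_right
    simp only at this
    convert this using 2 with y
    rw [intervalIntegral.integral_of_le hT.le, ← MeasureTheory.integral_Icc_eq_integral_Ioc]
  have mono := integral_mono (hintT.sub hint0) ((I1.const_mul (1/h₀)).sub (I2.const_mul h₀)) key
  simp only [Pi.sub_apply] at mono
  rw [integral_sub hintT hint0, integral_sub (I1.const_mul _) (I2.const_mul _),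
    MeasureTheory.integral_const_mul, MeasureTheory.integral_const_mul] at mono
  linarith
end

section
/- Let I ⊆ ℝ be an interval and let φ, ψ : I → ℝ be twice differentiable functions satisfying, for all t ∈ I: φ(t) > 0, ψ(t) > 0, φ'(t) ≤ −φ(t), φ''(t) ≤ φ(t), −ψ(t) ≤ ψ'(t) ≤ 0, |ψ''(t)| ≤ −ψ'(t), and (1 − φ'(t)/φ(t))·ψ'(t) ≥ −2·ψ(t). Then for all t ∈ I one has −φ''(t)/φ(t) − 2·ψ''(t)/ψ(t) + (φ'(t)/φ(t))² + 2·(ψ'(t)/ψ(t))² ≥ −2. -/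
/-- Lower bound `≥ -2` on the `dt²` coefficient of the Ricci curvature of the
doubly warped product metric `dt² + ψ² g_{T²} + φ² g_{S¹}`, under the
conditions imposed on the warping functions in the paper. -/
theorem stmt2 (I : Set ℝ) (hI : I.OrdConnected)
    (φ φ' φ'' ψ ψ' ψ'' : ℝ → ℝ)
    (hφd : ∀ t ∈ I, HasDerivAt φ (φ' t) t)
    (hφd' : ∀ t ∈ I, HasDerivAt φ' (φ'' t) t)
    (hψd : ∀ t ∈ I, HasDerivAt ψ (ψ' t) t)
    (hψd' : ∀ t ∈ I, HasDerivAt ψ' (ψ'' t) t)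
    (hφpos : ∀ t ∈ I, 0 < φ t)
    (hψpos : ∀ t ∈ I, 0 < ψ t)
    (hφ1 : ∀ t ∈ I, φ' t ≤ -φ t)
    (hφ2 : ∀ t ∈ I, φ'' t ≤ φ t)
    (hψ1 : ∀ t ∈ I, -ψ t ≤ ψ' t)
    (hψ2 : ∀ t ∈ I, ψ' t ≤ 0)
    (hψ3 : ∀ t ∈ I, |ψ'' t| ≤ -ψ' t)
    (hψ4 : ∀ t ∈ I, (1 - φ' t / φ t) * ψ' t ≥ -2 * ψ t) :
    ∀ t ∈ I,
      -(φ'' t) / φ t - 2 * (ψ'' t) / ψ t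
        + (φ' t / φ t) ^ 2 + 2 * (ψ' t / ψ t) ^ 2 ≥ -2 := by
  intro t ht
  have hφp := hφpos t ht
  have hψp := hψpos t ht
  have h1 : φ'' t / φ t ≤ 1 := (div_le_one hφp).2 (hφ2 t ht)
  have h2 : ψ'' t / ψ t ≤ 1 := by
    apply (div_le_one hψp).2
    have := le_trans (le_abs_self _) (hψ3 t ht)
    linarith [hψ1 t ht]
  have h3 : φ' t / φ t ≤ -1 := by
    rw [div_le_iff₀ hφp]
    linarith [hφ1 t ht]
  have h4 : (1:ℝ) ≤ (φ' t / φ t) ^ 2 := by nlinarith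
  have h5 : (0:ℝ) ≤ (ψ' t / ψ t) ^ 2 := sq_nonneg _
  have hne : -(φ'' t) / φ t = -(φ'' t / φ t) := neg_div _ _
  have hne2 : 2 * ψ'' t / ψ t = 2 * (ψ'' t / ψ t) := mul_div_assoc _ _ _
  rw [ge_iff_le, hne, hne2]
  linarith
end

section
/- Let I ⊆ ℝ be an interval and let φ, ψ : I → ℝ be twice differentiable functions satisfying, for all t ∈ I: φ(t) > 0, ψ(t) > 0, φ'(t) ≤ −φ(t), φ''(t) ≤ φ(t), −ψ(t) ≤ ψ'(t) ≤ 0, |ψ''(t)| ≤ −ψ'(t), and (1 − φ'(t)/φ(t))·ψ'(t) ≥ −2·ψ(t). Then for all t ∈ I one has −2·φ''(t)/φ(t) − 4·ψ''(t)/ψ(t) − 4·(φ'(t)/φ(t))·(ψ'(t)/ψ(t)) − 2·(ψ'(t)/ψ(t))² ≥ −16. -/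
/-- Uniform lower bound on the scalar curvature
`s = -2φ''/φ - 4ψ''/ψ - 4(φ'/φ)(ψ'/ψ) - 2(ψ'/ψ)²` of the doubly warped
product metric `dt² + ψ² g_{T²} + φ² g_{S¹}`, under the conditions imposed on
the warping functions in the paper. -/
theorem stmt5 (I : Set ℝ) (hI : I.OrdConnected)
    (φ φ' φ'' ψ ψ' ψ'' : ℝ → ℝ)
    (hφd : ∀ t ∈ I, HasDerivAt φ (φ' t) t)
    (hφd' : ∀ t ∈ I, HasDerivAt φ' (φ'' t) t)
    (hψd : ∀ t ∈ I, HasDerivAt ψ (ψ' t) t)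
    (hψd' : ∀ t ∈ I, HasDerivAt ψ' (ψ'' t) t)
    (hφpos : ∀ t ∈ I, 0 < φ t)
    (hψpos : ∀ t ∈ I, 0 < ψ t)
    (hφ1 : ∀ t ∈ I, φ' t ≤ -φ t)
    (hφ2 : ∀ t ∈ I, φ'' t ≤ φ t)
    (hψ1 : ∀ t ∈ I, -ψ t ≤ ψ' t)
    (hψ2 : ∀ t ∈ I, ψ' t ≤ 0)
    (hψ3 : ∀ t ∈ I, |ψ'' t| ≤ -ψ' t)
    (hψ4 : ∀ t ∈ I, (1 - φ' t / φ t) * ψ' t ≥ -2 * ψ t) :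
    ∀ t ∈ I,
      -2 * (φ'' t) / φ t - 4 * (ψ'' t) / ψ t
        - 4 * (φ' t / φ t) * (ψ' t / ψ t) - 2 * (ψ' t / ψ t) ^ 2 ≥ -16 := by
  intro t ht
  have hp := hφpos t ht
  have hq := hψpos t ht
  have hA : φ'' t / φ t ≤ 1 := (div_le_one hp).2 (hφ2 t ht)
  have hB : ψ'' t / ψ t ≤ 1 := by
    apply (div_le_one hq).2
    have h1 := le_trans (le_abs_self _) (hψ3 t ht)
    linarith [hψ1 t ht]
  have hu0 : ψ' t / ψ t ≤ 0 := div_nonpos_of_nonpos_of_nonneg (hψ2 t ht) hq.le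
  have hu1 : -1 ≤ ψ' t / ψ t := by
    rw [le_div_iff₀ hq]; linarith [hψ1 t ht]
  have h4 : -2 ≤ (1 - φ' t / φ t) * (ψ' t / ψ t) := by
    rw [← mul_div_assoc, le_div_iff₀ hq]
    have := hψ4 t ht
    linarith
  have e1 : -2 * φ'' t / φ t = -2 * (φ'' t / φ t) := by ring
  have e2 : (4 : ℝ) * ψ'' t / ψ t = 4 * (ψ'' t / ψ t) := by ring
  rw [e1]
  nlinarith [hA, hB, hu0, hu1, h4, mul_nonneg (neg_nonneg.2 hu0)
    (by linarith : (0:ℝ) ≤ ψ' t / ψ t + 1)]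
end
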